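/- Combined robustness bound: under the hypotheses that (i) ‖p_g − p*‖₂ ≤ ε_eff for g ∈ G with |G| ≥ ρK, (ii) scores s_r = λC_r − βD_r with C_r ∈ [0,1] and D_b ≥ D_g + γ for all g ∈ G, b ∈ B, (iii) ‖p_r − p*‖₂ ≤ Δ_max for all r, and softmax weights w_r = e^{s_r}/∑_j e^{s_j} over [K] = G ⊔ B ⊔ U, the aggregate q = ∑_r w_r p_r satisfies ‖q − p*‖₂ ≤ ε_eff + (Δ_max − ε_eff)·W_U + (Δ_max − ε_eff)·((1−ρ)/ρ)·exp(−βγ + λ), where W_U = ∑_{u∈U} w_u. -/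
import Mathlib


theorem combined_robustness_bound (V K : ℕ)
    (p : Fin K → EuclideanSpace ℝ (Fin V)) (pstar : EuclideanSpace ℝ (Fin V))
    (G B U : Finset (Fin K))
    (hGB : Disjoint G B) (hGU : Disjoint G U) (hBU : Disjoint B U)
    (hcover : G ∪ B ∪ U = Finset.univ)
    (hGne : G.Nonempty)
    (ρ : ℝ) (hρ1 : 1 / 2 < ρ) (hρ2 : ρ < 1) (hGcard : ρ * K ≤ (G.card : ℝ))
    (εeff Δmax : ℝ) (hε0 : 0 ≤ εeff) (hεΔ : εeff ≤ Δmax)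
    (hGclose : ∀ g ∈ G, ‖p g - pstar‖ ≤ εeff)
    (hall : ∀ r, ‖p r - pstar‖ ≤ Δmax)
    (C D : Fin K → ℝ) (hC : ∀ r, C r ∈ Set.Icc (0 : ℝ) 1)
    (lam β γ : ℝ) (hlam : 0 ≤ lam) (hβ : 0 < β) (hγ : 0 < γ)
    (hgap : ∀ g ∈ G, ∀ b ∈ B, D g + γ ≤ D b)
    (s : Fin K → ℝ) (hs : ∀ r, s r = lam * C r - β * D r)
    (w : Fin K → ℝ) (hw : ∀ r, w r = Real.exp (s r) / ∑ j, Real.exp (s j))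
    (q : EuclideanSpace ℝ (Fin V)) (hq : q = ∑ r, w r • p r) :
    ‖q - pstar‖ ≤ εeff + (Δmax - εeff) * (∑ u ∈ U, w u)
      + (Δmax - εeff) * ((1 - ρ) / ρ) * Real.exp (-β * γ + lam) := by
  have hKpos : 0 < K := by
    obtain ⟨g, _⟩ := hGne
    exact Fin.pos_iff_nonempty.mpr ⟨g⟩
  have hSpos : 0 < ∑ j, Real.exp (s j) :=
    Finset.sum_pos (fun j _ => Real.exp_pos _) ⟨⟨0, hKpos⟩, Finset.mem_univ _⟩
  have hw0 : ∀ r, 0 ≤ w r := fun r => by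
    rw [hw]; exact div_nonneg (Real.exp_pos _).le hSpos.le
  have hwsum : ∑ r, w r = 1 := by
    simp only [hw, ← Finset.sum_div]
    exact div_self hSpos.ne'
  have hdisj1 : Disjoint (G ∪ B) U := Finset.disjoint_union_left.mpr ⟨hGU, hBU⟩
  have hsplit : ∀ f : Fin K → ℝ,
      ∑ r, f r = ∑ r ∈ G, f r + ∑ r ∈ B, f r + ∑ r ∈ U, f r := by
    intro f
    rw [← hcover, Finset.sum_union hdisj1, Finset.sum_union hGB]
  -- cardinality facts
  have hcardK : (G.card : ℝ) + B.card + U.card = K := by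
    have h1 : ((G ∪ B) ∪ U).card = K := by rw [hcover]; simp
    rw [Finset.card_union_of_disjoint hdisj1, Finset.card_union_of_disjoint hGB] at h1
    exact_mod_cast congrArg (Nat.cast : ℕ → ℝ) h1
  have hGcardpos : (0 : ℝ) < G.card := by
    exact_mod_cast Finset.card_pos.mpr hGne
  have hU0 : (0 : ℝ) ≤ U.card := Nat.cast_nonneg _
  have hρ0 : (0 : ℝ) < ρ := by linarith
  -- pointwise exponential comparison
  have hbg : ∀ b ∈ B, ∀ g ∈ G, Real.exp (s b) ≤ Real.exp (lam - β * γ) * Real.exp (s g) := by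
    intro b hb g hg
    rw [← Real.exp_add]
    apply Real.exp_le_exp.mpr
    have h1 := (hC b).2
    have h2 := (hC g).1
    have h3 := hgap g hg b hb
    rw [hs b, hs g]
    nlinarith [hβ.le, hlam]
  -- bad-set exponential sum bound
  have hBsum : (∑ b ∈ B, Real.exp (s b)) * (G.card : ℝ)
      ≤ (B.card : ℝ) * (Real.exp (lam - β * γ) * ∑ g ∈ G, Real.exp (s g)) := by
    calc (∑ b ∈ B, Real.exp (s b)) * (G.card : ℝ)
        = ∑ b ∈ B, ∑ _g ∈ G, Real.exp (s b) := by
          rw [Finset.sum_mul]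
          exact Finset.sum_congr rfl fun b _ => by
            simp [Finset.sum_const, nsmul_eq_mul, mul_comm]
      _ ≤ ∑ b ∈ B, ∑ g ∈ G, Real.exp (lam - β * γ) * Real.exp (s g) := by
          refine Finset.sum_le_sum fun b hb => Finset.sum_le_sum fun g hg => hbg b hb g hg
      _ = (B.card : ℝ) * (Real.exp (lam - β * γ) * ∑ g ∈ G, Real.exp (s g)) := by
          simp [← Finset.mul_sum, Finset.sum_const, nsmul_eq_mul]
  have hGS : ∑ g ∈ G, Real.exp (s g) ≤ ∑ j, Real.exp (s j) :=
    Finset.sum_le_sum_of_subset_of_nonneg (Finset.subset_univ G)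
      (fun _ _ _ => (Real.exp_pos _).le)
  -- W_B bound
  have hratio : ρ * (B.card : ℝ) ≤ (1 - ρ) * (G.card : ℝ) := by
    nlinarith [hU0, hGcard, hcardK]
  have hWB : ∑ b ∈ B, w b ≤ ((1 - ρ) / ρ) * Real.exp (lam - β * γ) := by
    have hWBw : ∑ b ∈ B, w b = (∑ b ∈ B, Real.exp (s b)) / ∑ j, Real.exp (s j) := by
      simp [hw, Finset.sum_div]
    rw [hWBw, div_le_iff₀ hSpos]
    have hE : (0 : ℝ) < Real.exp (lam - β * γ) := Real.exp_pos _
    have hTG0 : (0:ℝ) < ∑ g ∈ G, Real.exp (s g) :=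
      Finset.sum_pos (fun g _ => Real.exp_pos _) hGne
    have step1 : (∑ b ∈ B, Real.exp (s b)) * (G.card : ℝ) * ρ
        ≤ ((1 - ρ) * (G.card : ℝ)) * (Real.exp (lam - β * γ) * ∑ j, Real.exp (s j)) := by
      calc (∑ b ∈ B, Real.exp (s b)) * (G.card : ℝ) * ρ
          ≤ ((B.card : ℝ) * (Real.exp (lam - β * γ) * ∑ g ∈ G, Real.exp (s g))) * ρ :=
            mul_le_mul_of_nonneg_right hBsum hρ0.le
        _ = (ρ * (B.card : ℝ)) * (Real.exp (lam - β * γ) * ∑ g ∈ G, Real.exp (s g)) := by ring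
        _ ≤ ((1 - ρ) * (G.card : ℝ)) * (Real.exp (lam - β * γ) * ∑ g ∈ G, Real.exp (s g)) :=
            mul_le_mul_of_nonneg_right hratio (mul_nonneg hE.le hTG0.le)
        _ ≤ ((1 - ρ) * (G.card : ℝ)) * (Real.exp (lam - β * γ) * ∑ j, Real.exp (s j)) := by
            refine mul_le_mul_of_nonneg_left (mul_le_mul_of_nonneg_left hGS hE.le) ?_
            have h1ρ : (0:ℝ) ≤ 1 - ρ := by linarith
            positivity
    have h2 : (1 - ρ) / ρ * Real.exp (lam - β * γ) * (∑ j, Real.exp (s j))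
        = ((1 - ρ) * Real.exp (lam - β * γ) * ∑ j, Real.exp (s j)) / ρ := by ring
    rw [h2, le_div_iff₀ hρ0]
    refine le_of_mul_le_mul_left ?_ hGcardpos
    ring_nf at step1 ⊢
    linarith [step1]
  -- norm bound
  have hnorm : ‖q - pstar‖ ≤ ∑ r, w r * ‖p r - pstar‖ := by
    have heq : q - pstar = ∑ r, w r • (p r - pstar) := by
      rw [hq]
      simp [smul_sub, Finset.sum_sub_distrib, ← Finset.sum_smul, hwsum]
    rw [heq]
    refine (norm_sum_le _ _).trans ?_
    refine Finset.sum_le_sum fun r _ => ?_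
    rw [norm_smul, Real.norm_eq_abs, abs_of_nonneg (hw0 r)]
  have hG' : ∑ g ∈ G, w g * ‖p g - pstar‖ ≤ (∑ g ∈ G, w g) * εeff := by
    rw [Finset.sum_mul]
    exact Finset.sum_le_sum fun g hg => mul_le_mul_of_nonneg_left (hGclose g hg) (hw0 g)
  have hB' : ∑ b ∈ B, w b * ‖p b - pstar‖ ≤ (∑ b ∈ B, w b) * Δmax := by
    rw [Finset.sum_mul]
    exact Finset.sum_le_sum fun b _ => mul_le_mul_of_nonneg_left (hall b) (hw0 b)
  have hU' : ∑ u ∈ U, w u * ‖p u - pstar‖ ≤ (∑ u ∈ U, w u) * Δmax := by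
    rw [Finset.sum_mul]
    exact Finset.sum_le_sum fun u _ => mul_le_mul_of_nonneg_left (hall u) (hw0 u)
  have hw1 : ∑ g ∈ G, w g + ∑ b ∈ B, w b + ∑ u ∈ U, w u = 1 := by
    rw [← hsplit w, hwsum]
  have hWU0 : 0 ≤ ∑ u ∈ U, w u := Finset.sum_nonneg fun u _ => hw0 u
  have hWB0 : 0 ≤ ∑ b ∈ B, w b := Finset.sum_nonneg fun b _ => hw0 b
  have hWG0 : 0 ≤ ∑ g ∈ G, w g := Finset.sum_nonneg fun g _ => hw0 g
  have hEeq : Real.exp (-β * γ + lam) = Real.exp (lam - β * γ) := by ring_nf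
  rw [hEeq]
  have hfinal : ‖q - pstar‖ ≤ (∑ g ∈ G, w g) * εeff + (∑ b ∈ B, w b) * Δmax
      + (∑ u ∈ U, w u) * Δmax := by
    refine hnorm.trans ?_
    rw [hsplit (fun r => w r * ‖p r - pstar‖)]
    exact add_le_add (add_le_add hG' hB') hU'
  have hGval : ∑ g ∈ G, w g = 1 - ∑ b ∈ B, w b - ∑ u ∈ U, w u := by linarith
  have hfinal' : ‖q - pstar‖ ≤ εeff + (Δmax - εeff) * (∑ b ∈ B, w b)
      + (Δmax - εeff) * (∑ u ∈ U, w u) := by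
    refine hfinal.trans (le_of_eq ?_)
    rw [hGval]; ring
  have hmul : (Δmax - εeff) * (∑ b ∈ B, w b)
      ≤ (Δmax - εeff) * ((1 - ρ) / ρ) * Real.exp (lam - β * γ) := by
    rw [mul_assoc]
    exact mul_le_mul_of_nonneg_left hWB (sub_nonneg.mpr hεΔ)
  linarith [hfinal', hmul]
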